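/- Suppose geodesics in last passage percolation on Z^2 are unique. For any points u < v and u' < v', the intersection Γ_{u,v} ∩ Γ_{u',v'} is either empty or equals the geodesic Γ_{u'',v''} for some pair of points u'' ≤ v''. -/

import Mathlib

open MeasureTheory

/-- A single up-right step in `ℤ × ℤ`. -/
def UpStep (p q : ℤ × ℤ) : Prop := q = (p.1 + 1, p.2) ∨ q = (p.1, p.2 + 1)

/-- `γ` is an up-right lattice path from `u` to `v`. -/
def IsUpRightPath (γ : List (ℤ × ℤ)) (u v : ℤ × ℤ) : Prop :=
  γ.head? = some u ∧ γ.getLast? = some v ∧ γ.Chain' UpStep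

/-- The passage time of a path: the sum of the weights of its vertices. -/
def pathWeight (ξ : ℤ × ℤ → ℝ) (γ : List (ℤ × ℤ)) : ℝ := (γ.map ξ).sum

/-- `γ` is a geodesic from `u` to `v`: an up-right path maximizing the passage time. -/
def IsGeodesic (ξ : ℤ × ℤ → ℝ) (u v : ℤ × ℤ) (γ : List (ℤ × ℤ)) : Prop :=
  IsUpRightPath γ u v ∧ ∀ γ', IsUpRightPath γ' u v → pathWeight ξ γ' ≤ pathWeight ξ γ

/-! Let `a` and `b` be the first and the last vertex of `Γ u v` lying on `Γ u' v'`. The piece of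
`Γ u v` from `a` to `b` is a geodesic, hence equals `Γ a b` by uniqueness, and it contains the whole
intersection. The piece of `Γ u' v'` from `a` to `b` is also a geodesic, hence also equals `Γ a b`,
so `Γ a b` lies on both geodesics and is exactly their intersection. -/

theorem UpStep.lt {p q : ℤ × ℤ} (h : UpStep p q) : p < q := by
  rcases h with rfl | rfl <;> simp [Prod.lt_iff]

theorem getElem_lt_getElem_of_isChain_upStep {γ : List (ℤ × ℤ)} (hγ : γ.IsChain UpStep)
    {i j : ℕ} (hij : i < j) (hj : j < γ.length) : γ[i] < γ[j] :=
  List.pairwise_iff_getElem.1 ((hγ.imp fun _ _ h ↦ h.lt).pairwise) i j (by omega) hj hij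

theorem getElem_le_getElem_of_isChain_upStep {γ : List (ℤ × ℤ)} (hγ : γ.IsChain UpStep)
    {i j : ℕ} (hij : i ≤ j) (hj : j < γ.length) : γ[i] ≤ γ[j] := by
  rcases hij.lt_or_eq with hij | rfl
  · exact (getElem_lt_getElem_of_isChain_upStep hγ hij hj).le
  · exact le_rfl

theorem le_of_getElem_le_of_isChain_upStep {γ : List (ℤ × ℤ)} (hγ : γ.IsChain UpStep)
    {i j : ℕ} (hi : i < γ.length) (hj : j < γ.length) (hle : γ[i] ≤ γ[j]) : i ≤ j :=
  not_lt.1 fun hji ↦ not_lt_of_ge hle (getElem_lt_getElem_of_isChain_upStep hγ hji hi)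

theorem List.exists_eq_append_append_of_le {α : Type*} (γ : List α) {i j : ℕ} (hij : i ≤ j)
    (hj : j < γ.length) :
    ∃ σ δ τ, γ = σ ++ δ ++ τ ∧ δ.head? = some γ[i] ∧ δ.getLast? = some γ[j] ∧
      ∀ k (hk : k < γ.length), i ≤ k → k ≤ j → γ[k] ∈ δ := by
  set δ := (γ.drop i).take (j + 1 - i)
  have hδ : ∀ k (hk : k < j + 1 - i), δ[k]? = γ[i + k]? := fun k hk ↦ by
    rw [List.getElem?_take, if_pos hk, List.getElem?_drop]
  refine ⟨γ.take i, δ, γ.drop (j + 1), ?_, ?_, ?_, fun k hk hik hkj ↦ ?_⟩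
  · have hτ : γ.drop (j + 1) = (γ.drop i).drop (j + 1 - i) := by
      rw [List.drop_drop]; congr 1; omega
    rw [hτ, List.append_assoc, List.take_append_drop, List.take_append_drop]
  · rw [List.head?_eq_getElem?, hδ 0 (by omega), Nat.add_zero, List.getElem?_eq_getElem]
  · rw [List.getLast?_eq_getElem?, show δ.length - 1 = j - i by simp [δ]; omega,
      hδ _ (by omega), show i + (j - i) = j by omega, List.getElem?_eq_getElem]
  · rw [List.mem_iff_getElem?]
    exact ⟨k - i, by rw [hδ _ (by omega), show i + (k - i) = k by omega, List.getElem?_eq_getElem]⟩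

theorem List.exists_first_last_index_mem {α : Type*} {γ₁ γ₂ : List α}
    (h : ∃ w, w ∈ γ₁ ∧ w ∈ γ₂) :
    ∃ i j, ∃ (hij : i ≤ j) (hj : j < γ₁.length), γ₁[i] ∈ γ₂ ∧ γ₁[j] ∈ γ₂ ∧
      ∀ k (hk : k < γ₁.length), γ₁[k] ∈ γ₂ → i ≤ k ∧ k ≤ j := by
  classical
  set S := (Finset.range γ₁.length).filter fun k ↦ ∃ hk : k < γ₁.length, γ₁[k] ∈ γ₂
  have hS : ∀ k (hk : k < γ₁.length), k ∈ S ↔ γ₁[k] ∈ γ₂ := fun k hk ↦ by simp [S, hk]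
  obtain ⟨w, hw₁, hw₂⟩ := h
  obtain ⟨k, hk, rfl⟩ := List.getElem_of_mem hw₁
  have hne : S.Nonempty := ⟨k, (hS k hk).2 hw₂⟩
  have hlt : ∀ l ∈ S, l < γ₁.length := fun l hl ↦ Finset.mem_range.1 (Finset.mem_filter.1 hl).1
  have hmin := S.min'_mem hne
  have hmax := S.max'_mem hne
  refine ⟨S.min' hne, S.max' hne, S.min'_le _ hmax, hlt _ hmax, (hS _ (hlt _ hmin)).1 hmin,
    (hS _ (hlt _ hmax)).1 hmax, fun l hl hl₂ ↦ ?_⟩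
  exact ⟨S.min'_le _ ((hS l hl).2 hl₂), S.le_max' _ ((hS l hl).2 hl₂)⟩

theorem exists_isUpRightPath_infix_of_le {γ : List (ℤ × ℤ)} (hγ : γ.IsChain UpStep) {i j : ℕ}
    (hij : i ≤ j) (hj : j < γ.length) :
    ∃ σ δ τ, γ = σ ++ δ ++ τ ∧ IsUpRightPath δ γ[i] γ[j] ∧
      ∀ k (hk : k < γ.length), i ≤ k → k ≤ j → γ[k] ∈ δ := by
  obtain ⟨σ, δ, τ, hsplit, hhead, hlast, hmem⟩ := γ.exists_eq_append_append_of_le hij hj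
  exact ⟨σ, δ, τ, hsplit, ⟨hhead, hlast, hγ.infix (hsplit ▸ List.infix_append σ δ τ)⟩, hmem⟩

theorem IsUpRightPath.replace_infix {σ δ δ' τ : List (ℤ × ℤ)} {u v a b : ℤ × ℤ}
    (h : IsUpRightPath (σ ++ δ ++ τ) u v) (hδ : IsUpRightPath δ a b)
    (hδ' : IsUpRightPath δ' a b) : IsUpRightPath (σ ++ δ' ++ τ) u v := by
  obtain ⟨hhead, hlast, hchain : (σ ++ δ ++ τ).IsChain UpStep⟩ := h
  obtain ⟨d₁, d₂, -⟩ := hδ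
  obtain ⟨e₁, e₂, e₃ : δ'.IsChain UpStep⟩ := hδ'
  refine ⟨?_, ?_, ?_⟩
  · simpa [List.head?_append, d₁, e₁] using hhead
  · simpa [List.getLast?_append, d₂, e₂] using hlast
  · show (σ ++ δ' ++ τ).IsChain UpStep
    -- the junctions with `σ` and `τ` only see the endpoints `a` and `b` of `δ` and `δ'`
    simp only [List.append_assoc, List.isChain_append] at hchain ⊢
    simp_all

theorem pathWeight_append (ξ : ℤ × ℤ → ℝ) (γ₁ γ₂ : List (ℤ × ℤ)) :
    pathWeight ξ (γ₁ ++ γ₂) = pathWeight ξ γ₁ + pathWeight ξ γ₂ := by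
  simp [pathWeight]

theorem IsGeodesic.of_append_append {ξ : ℤ × ℤ → ℝ} {σ δ τ : List (ℤ × ℤ)} {u v a b : ℤ × ℤ}
    (h : IsGeodesic ξ u v (σ ++ δ ++ τ)) (hδ : IsUpRightPath δ a b) : IsGeodesic ξ a b δ := by
  refine ⟨hδ, fun δ' hδ' ↦ ?_⟩
  have := h.2 _ (h.1.replace_infix hδ hδ')
  simp only [pathWeight_append] at this
  linarith

theorem IsGeodesic.infix_of_unique {ξ : ℤ × ℤ → ℝ} {γ η : List (ℤ × ℤ)} {u v a b : ℤ × ℤ}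
    (hγ : IsGeodesic ξ u v γ) (ha : a ∈ γ) (hb : b ∈ γ) (hab : a ≤ b)
    (huniq : ∀ δ, IsGeodesic ξ a b δ → δ = η) : η <:+: γ := by
  obtain ⟨i, hi, rfl⟩ := List.getElem_of_mem ha
  obtain ⟨j, hj, rfl⟩ := List.getElem_of_mem hb
  have hij := le_of_getElem_le_of_isChain_upStep hγ.1.2.2 hi hj hab
  obtain ⟨σ, δ, τ, hsplit, hδ, -⟩ := exists_isUpRightPath_infix_of_le hγ.1.2.2 hij hj
  rw [← huniq δ ((hsplit ▸ hγ).of_append_append hδ), hsplit]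
  exact List.infix_append σ δ τ

/-- The intersection of two geodesics is empty or is itself a geodesic. -/
theorem stmt4 (ξ : ℤ × ℤ → ℝ) (Γ : ℤ × ℤ → ℤ × ℤ → List (ℤ × ℤ))
    (hΓ : ∀ u v : ℤ × ℤ, u ≤ v → IsGeodesic ξ u v (Γ u v))
    (huniq : ∀ u v : ℤ × ℤ, u ≤ v → ∀ γ, IsGeodesic ξ u v γ → γ = Γ u v)
    (u v u' v' : ℤ × ℤ) (huv : u < v) (hu'v' : u' < v') :
    {w : ℤ × ℤ | w ∈ Γ u v} ∩ {w : ℤ × ℤ | w ∈ Γ u' v'} = ∅ ∨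
      ∃ u'' v'' : ℤ × ℤ, u'' ≤ v'' ∧
        {w : ℤ × ℤ | w ∈ Γ u v} ∩ {w : ℤ × ℤ | w ∈ Γ u' v'} = {w : ℤ × ℤ | w ∈ Γ u'' v''} := by
  rcases Set.eq_empty_or_nonempty ({w | w ∈ Γ u v} ∩ {w | w ∈ Γ u' v'}) with hempty | hcommon
  · exact Or.inl hempty
  have hg₁ := hΓ u v huv.le
  have hg₂ := hΓ u' v' hu'v'.le
  obtain ⟨i, j, hij, hj, hi₂, hj₂, hbetween⟩ := List.exists_first_last_index_mem hcommon
  obtain ⟨σ, δ, τ, hsplit, hδ, hmem⟩ := exists_isUpRightPath_infix_of_le hg₁.1.2.2 hij hj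
  have hab := getElem_le_getElem_of_isChain_upStep hg₁.1.2.2 hij hj
  have hδΓ : δ = Γ _ _ := huniq _ _ hab δ ((hsplit ▸ hg₁).of_append_append hδ)
  refine Or.inr ⟨_, _, hab, Set.Subset.antisymm ?_ fun w hw ↦ ⟨?_, ?_⟩⟩
  · rintro _ ⟨hw₁, hw₂⟩
    obtain ⟨k, hk, rfl⟩ := List.getElem_of_mem hw₁
    exact hδΓ ▸ hmem k hk (hbetween k hk hw₂).1 (hbetween k hk hw₂).2
  · exact hsplit ▸ (List.infix_append σ δ τ).subset (hδΓ ▸ hw)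
  · exact (hg₂.infix_of_unique hi₂ hj₂ hab (huniq _ _ hab)).subset hw
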